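/- arXiv:2407.00424 — 3 statements merged into one kernel-verified Lean document; each statement's English description precedes it below -/
import Mathlib

section
/- The four first integrals C₁ = U'' + s₂A² - cU + s₁U^{p+1}/(p+1), C₂ = A²(Φ' - c/2), C₃ = k(UU'' - (1/2)(U')² - (c/2)U² + s₁U^{p+2}/(p+2)) - s₂(A')² - s₂A²((Φ')² + ω), and C₄ = (k/2)(U'' + s₁U^{p+1}/(p+1) + s₂A²)² - kc((1/2)(U')² + s₁U^{p+2}/((p+1)(p+2))) - s₂c(A')² - s₂A²(c(Φ')² + 2ωΦ' + kcU) satisfy the algebraic relation (k/2)C₁² - 2s₂ωC₂ + cC₃ - C₄ = 0, for every smooth solution (U, A, Φ) of the travelling-wave ODE system U''' + (s₁U^p - c)U' + 2s₂AA' = 0, A'' + (kU + cΦ' - (Φ')² + ω)A = 0, AΦ'' + (2Φ' - c)A' = 0 for which each Cᵢ is constant. -/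
/-- algebraic relation among the four first integrals. -/
theorem first_integrals_algebraic_relation
    (p : ℕ) (hp : 1 ≤ p) (s₁ s₂ k c ω : ℝ)
    (hs₁ : s₁ = 1 ∨ s₁ = -1) (hs₂ : s₂ = 1 ∨ s₂ = -1) (hk : k ≠ 0)
    (U A Φ : ℝ → ℝ)
    (hU : ContDiff ℝ (⊤ : ℕ∞) U) (hA : ContDiff ℝ (⊤ : ℕ∞) A) (hΦ : ContDiff ℝ (⊤ : ℕ∞) Φ)
    (hode1 : ∀ ζ, deriv (deriv (deriv U)) ζ + (s₁ * (U ζ)^p - c) * deriv U ζ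
      + 2 * s₂ * A ζ * deriv A ζ = 0)
    (hode2 : ∀ ζ, deriv (deriv A) ζ
      + (k * U ζ + c * deriv Φ ζ - (deriv Φ ζ)^2 + ω) * A ζ = 0)
    (hode3 : ∀ ζ, A ζ * deriv (deriv Φ) ζ + (2 * deriv Φ ζ - c) * deriv A ζ = 0)
    (C₁ C₂ C₃ C₄ : ℝ)
    (hC₁ : ∀ ζ, C₁ = deriv (deriv U) ζ + s₂ * (A ζ)^2 - c * U ζ
      + s₁ * (U ζ)^(p+1) / (p+1))
    (hC₂ : ∀ ζ, C₂ = (A ζ)^2 * (deriv Φ ζ - c/2))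
    (hC₃ : ∀ ζ, C₃ = k * (U ζ * deriv (deriv U) ζ - (1/2) * (deriv U ζ)^2
        - (c/2) * (U ζ)^2 + s₁ * (U ζ)^(p+2) / (p+2))
      - s₂ * (deriv A ζ)^2 - s₂ * (A ζ)^2 * ((deriv Φ ζ)^2 + ω))
    (hC₄ : ∀ ζ, C₄ = (k/2) * (deriv (deriv U) ζ + s₁ * (U ζ)^(p+1)/(p+1)
        + s₂ * (A ζ)^2)^2
      - k * c * ((1/2) * (deriv U ζ)^2 + s₁ * (U ζ)^(p+2)/((p+1)*(p+2)))
      - s₂ * c * (deriv A ζ)^2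
      - s₂ * (A ζ)^2 * (c * (deriv Φ ζ)^2 + 2 * ω * deriv Φ ζ + k * c * U ζ)) :
    (k/2) * C₁^2 - 2 * s₂ * ω * C₂ + c * C₃ - C₄ = 0 := by
  have h1 := hC₁ 0
  have h2 := hC₂ 0
  have h3 := hC₃ 0
  have h4 := hC₄ 0
  rw [h1, h2, h3, h4]
  have hp1 : ((p:ℝ)+1) ≠ 0 := by positivity
  have hp2 : ((p:ℝ)+2) ≠ 0 := by positivity
  have e1 : (U 0)^(p+2) = (U 0)^(p+1) * U 0 := by ring
  push_cast
  field_simp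
  ring
end

section
/- Suppose G : ℝ → ℝ is smooth, U : ℝ → ℝ satisfies (U')² = -2s₂G(U) - 2s₁U^{p+2}/((p+1)(p+2)) + cU² + 2C₁U + 2C̃₄ with G'(U(ζ)) > 0 for all ζ, and G satisfies the second-order ODE (1/2)(s₂G(V) + s₁V^{p+2}/((p+1)(p+2)) - (c/2)V² - C₁V - C̃₄)·G''(V)² = (kV + c²/4 + ω)G'(V)² - (kG(V) - s₂(C̃₃ + kC̃₄))G'(V) + C₂² for all V in the range of U. Define A(ζ) = √(G'(U(ζ))). Then the pair (U, A) satisfies (k/2)(U')² + s₂(A')² = kC₁U + (kc/2)U² - s₁kU^{p+2}/((p+1)(p+2)) - s₂kUA² - s₂(c²/4 + ω)A² - s₂C₂²A⁻² - C̃₃. -/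
/-- the hodograph reduction step — a solution of the base ODE for G
together with the quadrature ODE for U yields the reduced first-order equation. -/
theorem hodograph_base_ode_yields_first_integral
    (p : ℕ) (hp : 1 ≤ p) (s₁ s₂ c ω k C₁ C₂ C₃' C₄' : ℝ)
    (hs₁ : s₁ = 1 ∨ s₁ = -1) (hs₂ : s₂ = 1 ∨ s₂ = -1)
    (G U : ℝ → ℝ) (hG : ContDiff ℝ (⊤ : ℕ∞) G) (hU : ContDiff ℝ (⊤ : ℕ∞) U)
    (hquad : ∀ ζ, (deriv U ζ)^2 = -2 * s₂ * G (U ζ)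
      - 2 * s₁ * (U ζ)^(p+2) / ((p+1)*(p+2)) + c * (U ζ)^2 + 2 * C₁ * U ζ + 2 * C₄')
    (hGpos : ∀ ζ, 0 < deriv G (U ζ))
    (hbase : ∀ V ∈ Set.range U,
      (1/2) * (s₂ * G V + s₁ * V^(p+2) / ((p+1)*(p+2)) - (c/2) * V^2 - C₁ * V - C₄')
          * (deriv (deriv G) V)^2
        = (k * V + c^2/4 + ω) * (deriv G V)^2
          - (k * G V - s₂ * (C₃' + k * C₄')) * deriv G V + C₂^2)
    (A : ℝ → ℝ) (hA : ∀ ζ, A ζ = Real.sqrt (deriv G (U ζ))) :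
    ∀ ζ : ℝ, (k/2) * (deriv U ζ)^2 + s₂ * (deriv A ζ)^2
      = k * C₁ * U ζ + (k*c/2) * (U ζ)^2 - s₁ * k * (U ζ)^(p+2) / ((p+1)*(p+2))
        - s₂ * k * U ζ * (A ζ)^2 - s₂ * (c^2/4 + ω) * (A ζ)^2
        - s₂ * C₂^2 / (A ζ)^2 - C₃' := by
  intro ζ
  have hGi : ContDiff ℝ (⊤ : ℕ∞) G := hG.of_le (by simp)
  have hGd : Differentiable ℝ (deriv G) :=
    ((contDiff_infty_iff_deriv.mp hGi).2).differentiable (by simp)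
  have hUd : Differentiable ℝ U := hU.differentiable (by simp)
  have hpos := hGpos ζ
  have hg0 : deriv G (U ζ) ≠ 0 := ne_of_gt hpos
  have h1 : HasDerivAt (fun ζ => deriv G (U ζ))
      (deriv (deriv G) (U ζ) * deriv U ζ) ζ :=
    ((hGd (U ζ)).hasDerivAt).comp ζ ((hUd ζ).hasDerivAt)
  have hAfun : A = fun ζ => Real.sqrt (deriv G (U ζ)) := funext hA
  have h2 : HasDerivAt A
      (deriv (deriv G) (U ζ) * deriv U ζ / (2 * Real.sqrt (deriv G (U ζ)))) ζ := by
    rw [hAfun]; exact h1.sqrt hg0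
  have hsq : Real.sqrt (deriv G (U ζ)) ^ 2 = deriv G (U ζ) := Real.sq_sqrt hpos.le
  have hsqpos : 0 < Real.sqrt (deriv G (U ζ)) := Real.sqrt_pos.mpr hpos
  have hsq0 : Real.sqrt (deriv G (U ζ)) ≠ 0 := ne_of_gt hsqpos
  have hA2 : (A ζ)^2 = deriv G (U ζ) := by rw [hA ζ]; exact hsq
  have hA'sq : (deriv A ζ)^2
      = (deriv (deriv G) (U ζ))^2 * (deriv U ζ)^2 / (4 * deriv G (U ζ)) := by
    rw [h2.deriv]
    rw [div_pow, mul_pow, mul_pow, hsq]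
    ring_nf
  have hb := hbase (U ζ) ⟨ζ, rfl⟩
  have hq := hquad ζ
  have hs2 : s₂^2 = 1 := by rcases hs₂ with h | h <;> simp [h]
  have hkey : (deriv (deriv G) (U ζ))^2 * (deriv U ζ)^2
      = -4 * ((k * U ζ + c^2/4 + ω) * (deriv G (U ζ))^2
          - (k * G (U ζ) - s₂ * (C₃' + k * C₄')) * deriv G (U ζ) + C₂^2) := by
    linear_combination (deriv (deriv G) (U ζ))^2 * hq - 4 * hb
  rw [hA'sq, hA2, hkey, hq]
  rcases hs₂ with rfl | rfl <;> (field_simp; ring)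
end

section
/- For every smooth solution (u, ψ) of the system u_t + s₁u^p u_x + u_{xxx} + s₂(|ψ|²)_x = 0, iψ_t + ψ_{xx} + kuψ = 0, the density T₄ = (1/2)u_x² - s₁u^{p+2}/((p+1)(p+2)) + (s₂/k)|ψ_x|² - s₂u|ψ|² and flux X₄ = -(1/2)(u_{xx} + s₁u^{p+1}/(p+1) + s₂|ψ|²)² - u_t u_x - (s₂/k)(ψ_t ψ̄_x + ψ_x ψ̄_t) satisfy the conservation law D_t T₄ + D_x X₄ = 0. -/
open Complex

variable {E : Type*} [NormedAddCommGroup E] [NormedSpace ℝ E]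

lemma hasDerivAt_fst (F : ℝ × ℝ → E) (hF : ContDiff ℝ (⊤ : ℕ∞) F) (t x : ℝ) :
    HasDerivAt (fun τ => F (τ, x)) (fderiv ℝ F (t, x) (1, 0)) t := by
  have h := (hF.differentiable (by simp) (t, x)).hasFDerivAt
  have hline : HasDerivAt (fun τ : ℝ => (τ, x)) ((1 : ℝ), (0 : ℝ)) t :=
    HasDerivAt.prodMk (hasDerivAt_id t) (hasDerivAt_const t x)
  exact h.comp_hasDerivAt t hline

lemma hasDerivAt_snd (F : ℝ × ℝ → E) (hF : ContDiff ℝ (⊤ : ℕ∞) F) (t x : ℝ) :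
    HasDerivAt (fun y => F (t, y)) (fderiv ℝ F (t, x) (0, 1)) x := by
  have h := (hF.differentiable (by simp) (t, x)).hasFDerivAt
  have hline : HasDerivAt (fun y : ℝ => (t, y)) ((0 : ℝ), (1 : ℝ)) x :=
    HasDerivAt.prodMk (hasDerivAt_const x t) (hasDerivAt_id x)
  exact h.comp_hasDerivAt x hline

lemma contDiff_fderiv_apply (F : ℝ × ℝ → E) (hF : ContDiff ℝ (⊤ : ℕ∞) F) (v : ℝ × ℝ) :
    ContDiff ℝ (⊤ : ℕ∞) (fun p => fderiv ℝ F p v) :=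
  (ContinuousLinearMap.apply ℝ E v).contDiff.comp (hF.fderiv_right (by simp))

lemma fderiv_swap (F : ℝ × ℝ → E) (hF : ContDiff ℝ (⊤ : ℕ∞) F) (q v w : ℝ × ℝ) :
    fderiv ℝ (fun p => fderiv ℝ F p v) q w = fderiv ℝ (fun p => fderiv ℝ F p w) q v := by
  have hd : ∀ y, HasFDerivAt F (fderiv ℝ F y) y := fun y =>
    (hF.differentiable (by simp) y).hasFDerivAt
  have h2 : HasFDerivAt (fderiv ℝ F) (fderiv ℝ (fderiv ℝ F) q) q :=
    (((hF.fderiv_right (m := (⊤ : ℕ∞)) (by simp)).differentiable (by simp)) q).hasFDerivAt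
  have hv : fderiv ℝ (fun p => fderiv ℝ F p v) q w
      = fderiv ℝ (fderiv ℝ F) q w v := by
    have := ((ContinuousLinearMap.apply ℝ E v).hasFDerivAt.comp q h2).fderiv
    rw [show (fun p => fderiv ℝ F p v) = (ContinuousLinearMap.apply ℝ E v) ∘ (fderiv ℝ F) from rfl, this]
    rfl
  have hw : fderiv ℝ (fun p => fderiv ℝ F p w) q v
      = fderiv ℝ (fderiv ℝ F) q v w := by
    have := ((ContinuousLinearMap.apply ℝ E w).hasFDerivAt.comp q h2).fderiv
    rw [show (fun p => fderiv ℝ F p w) = (ContinuousLinearMap.apply ℝ E w) ∘ (fderiv ℝ F) from rfl, this]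
    rfl
  rw [hv, hw]
  exact second_derivative_symmetric hd h2 w v

lemma hasDerivAt_normSq {g : ℝ → ℂ} {g' : ℂ} {x : ℝ} (h : HasDerivAt g g' x) :
    HasDerivAt (fun y => Complex.normSq (g y))
      ((g' * (starRingEnd ℂ) (g x) + g x * (starRingEnd ℂ) g').re) x := by
  have hc : HasDerivAt (fun y => (starRingEnd ℂ) (g y)) ((starRingEnd ℂ) g') x := h.star
  have hm := h.mul hc
  have := Complex.reCLM.hasFDerivAt.comp_hasDerivAt x hm
  have e : (fun y => Complex.normSq (g y)) = Complex.reCLM ∘ (g * fun y => (starRingEnd ℂ) (g y)) := by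
    funext y
    simp [Complex.normSq_apply, Complex.mul_re]
  rw [e]
  exact this

/-- energy conservation law for the gKdV–LS system. -/
theorem energy_conservation_law
    (p : ℕ) (hp : 1 ≤ p) (s₁ s₂ k : ℝ)
    (hs₁ : s₁ = 1 ∨ s₁ = -1) (hs₂ : s₂ = 1 ∨ s₂ = -1) (hk : k ≠ 0)
    (u : ℝ → ℝ → ℝ) (ψ : ℝ → ℝ → ℂ)
    (hu : ContDiff ℝ (⊤ : ℕ∞) (Function.uncurry u)) (hψ : ContDiff ℝ (⊤ : ℕ∞) (Function.uncurry ψ))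
    (heq1 : ∀ t x, deriv (fun τ => u τ x) t + s₁ * (u t x)^p * deriv (u t) x
      + iteratedDeriv 3 (u t) x + s₂ * deriv (fun y => Complex.normSq (ψ t y)) x = 0)
    (heq2 : ∀ t x, Complex.I * deriv (fun τ => ψ τ x) t
      + iteratedDeriv 2 (ψ t) x + (k : ℂ) * (u t x : ℂ) * ψ t x = 0)
    (T₄ X₄ : ℝ → ℝ → ℝ)
    (hT₄ : ∀ t x, T₄ t x = (1/2) * (deriv (u t) x)^2
      - s₁ * (u t x)^(p+2) / ((p+1)*(p+2))
      + (s₂ / k) * Complex.normSq (deriv (ψ t) x)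
      - s₂ * u t x * Complex.normSq (ψ t x))
    (hX₄ : ∀ t x, X₄ t x = -(1/2) * (iteratedDeriv 2 (u t) x
        + s₁ * (u t x)^(p+1) / (p+1) + s₂ * Complex.normSq (ψ t x))^2
      - deriv (fun τ => u τ x) t * deriv (u t) x
      - (s₂ / k) * (deriv (fun τ => ψ τ x) t * (starRingEnd ℂ) (deriv (ψ t) x)
        + deriv (ψ t) x * (starRingEnd ℂ) (deriv (fun τ => ψ τ x) t)).re) :
    ∀ t x, deriv (fun τ => T₄ τ x) t + deriv (fun y => X₄ t y) x = 0 := by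
  intro t x
  set U : ℝ × ℝ → ℝ := Function.uncurry u with hU
  set Ψ : ℝ × ℝ → ℂ := Function.uncurry ψ with hΨ
  -- first-order partials
  set U1 : ℝ × ℝ → ℝ := fun q => fderiv ℝ U q (1, 0) with hU1
  set U2 : ℝ × ℝ → ℝ := fun q => fderiv ℝ U q (0, 1) with hU2
  set P1 : ℝ × ℝ → ℂ := fun q => fderiv ℝ Ψ q (1, 0) with hP1
  set P2 : ℝ × ℝ → ℂ := fun q => fderiv ℝ Ψ q (0, 1) with hP2
  have hU1c : ContDiff ℝ (⊤ : ℕ∞) U1 := contDiff_fderiv_apply U hu _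
  have hU2c : ContDiff ℝ (⊤ : ℕ∞) U2 := contDiff_fderiv_apply U hu _
  have hP1c : ContDiff ℝ (⊤ : ℕ∞) P1 := contDiff_fderiv_apply Ψ hψ _
  have hP2c : ContDiff ℝ (⊤ : ℕ∞) P2 := contDiff_fderiv_apply Ψ hψ _
  -- second-order partials
  set U22 : ℝ × ℝ → ℝ := fun q => fderiv ℝ U2 q (0, 1) with hU22
  set P22 : ℝ × ℝ → ℂ := fun q => fderiv ℝ P2 q (0, 1) with hP22
  have hU22c : ContDiff ℝ (⊤ : ℕ∞) U22 := contDiff_fderiv_apply U2 hU2c _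
  set U222 : ℝ × ℝ → ℝ := fun q => fderiv ℝ U22 q (0, 1) with hU222
  -- basic HasDerivAt facts
  have hux : ∀ a b, HasDerivAt (u a) (U2 (a, b)) b := fun a b => hasDerivAt_snd U hu a b
  have hut : ∀ a b, HasDerivAt (fun τ => u τ b) (U1 (a, b)) a := fun a b => hasDerivAt_fst U hu a b
  have hpx : ∀ a b, HasDerivAt (ψ a) (P2 (a, b)) b := fun a b => hasDerivAt_snd Ψ hψ a b
  have hpt : ∀ a b, HasDerivAt (fun τ => ψ τ b) (P1 (a, b)) a := fun a b => hasDerivAt_fst Ψ hψ a b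
  have hu2x : ∀ a b, HasDerivAt (fun y => U2 (a, y)) (U22 (a, b)) b := fun a b =>
    hasDerivAt_snd U2 hU2c a b
  have hu22x : ∀ a b, HasDerivAt (fun y => U22 (a, y)) (U222 (a, b)) b := fun a b =>
    hasDerivAt_snd U22 hU22c a b
  have hu2t : ∀ a b, HasDerivAt (fun τ => U2 (τ, b)) (fderiv ℝ U2 (a, b) (1, 0)) a := fun a b =>
    hasDerivAt_fst U2 hU2c a b
  have hu1x : ∀ a b, HasDerivAt (fun y => U1 (a, y)) (fderiv ℝ U1 (a, b) (0, 1)) b := fun a b =>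
    hasDerivAt_snd U1 hU1c a b
  have hp2x : ∀ a b, HasDerivAt (fun y => P2 (a, y)) (P22 (a, b)) b := fun a b =>
    hasDerivAt_snd P2 hP2c a b
  have hp2t : ∀ a b, HasDerivAt (fun τ => P2 (τ, b)) (fderiv ℝ P2 (a, b) (1, 0)) a := fun a b =>
    hasDerivAt_fst P2 hP2c a b
  have hp1x : ∀ a b, HasDerivAt (fun y => P1 (a, y)) (fderiv ℝ P1 (a, b) (0, 1)) b := fun a b =>
    hasDerivAt_snd P1 hP1c a b
  -- derivative function equalities
  have hdux : ∀ a, deriv (u a) = fun y => U2 (a, y) := fun a => funext fun y => (hux a y).deriv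
  have hdpx : ∀ a, deriv (ψ a) = fun y => P2 (a, y) := fun a => funext fun y => (hpx a y).deriv
  have hdu2x : ∀ a, (deriv fun y => U2 (a, y)) = fun y => U22 (a, y) := fun a =>
    funext fun y => (hu2x a y).deriv
  have hit2u : ∀ a b, iteratedDeriv 2 (u a) b = U22 (a, b) := by
    intro a b
    rw [iteratedDeriv_succ, iteratedDeriv_one, hdux a]
    exact (hu2x a b).deriv
  have hit3u : ∀ a b, iteratedDeriv 3 (u a) b = U222 (a, b) := by
    intro a b
    rw [show (3:ℕ) = 2 + 1 from rfl, iteratedDeriv_succ, iteratedDeriv_succ, iteratedDeriv_one,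
      hdux a, hdu2x a]
    exact (hu22x a b).deriv
  have hit2p : ∀ a b, iteratedDeriv 2 (ψ a) b = P22 (a, b) := by
    intro a b
    rw [iteratedDeriv_succ, iteratedDeriv_one, hdpx a]
    exact (hp2x a b).deriv
  -- PDEs in partial-derivative form
  have E1 : ∀ a b, U1 (a, b) + s₁ * (u a b) ^ p * U2 (a, b) + U222 (a, b)
      + s₂ * (P2 (a, b) * (starRingEnd ℂ) (ψ a b)
        + ψ a b * (starRingEnd ℂ) (P2 (a, b))).re = 0 := by
    intro a b
    have h := heq1 a b
    rw [(hut a b).deriv, hit3u a b, hdux a, (hasDerivAt_normSq (hpx a b)).deriv] at h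
    exact h
  have E2 : ∀ a b, Complex.I * P1 (a, b) + P22 (a, b) + (k:ℂ) * (u a b : ℂ) * ψ a b = 0 := by
    intro a b
    have h := heq2 a b
    rw [(hpt a b).deriv, hit2p a b] at h
    exact h
  -- time derivative of T₄
  have hTfun : (fun τ => T₄ τ x) = fun τ => (1/2) * (U2 (τ, x))^2
      - s₁ * (u τ x)^(p+2) / ((p+1)*(p+2))
      + (s₂ / k) * Complex.normSq (P2 (τ, x))
      - s₂ * u τ x * Complex.normSq (ψ τ x) := by
    funext τ
    rw [hT₄, (hux τ x).deriv, (hpx τ x).deriv]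
  have HT : HasDerivAt (fun τ => T₄ τ x)
      ((1/2) * ((2:ℕ) * (U2 (t, x))^(2-1) * fderiv ℝ U2 (t, x) (1, 0))
       - s₁ * (((p+2:ℕ)) * (u t x)^(p+2-1) * U1 (t, x)) / ((p+1)*(p+2))
       + (s₂ / k) * (fderiv ℝ P2 (t, x) (1, 0) * (starRingEnd ℂ) (P2 (t, x))
           + P2 (t, x) * (starRingEnd ℂ) (fderiv ℝ P2 (t, x) (1, 0))).re
       - ((s₂ * U1 (t, x)) * Complex.normSq (ψ t x)
           + (s₂ * u t x) * (P1 (t, x) * (starRingEnd ℂ) (ψ t x)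
             + ψ t x * (starRingEnd ℂ) (P1 (t, x))).re)) t := by
    rw [hTfun]
    exact ((((hu2t t x).pow 2).const_mul (1/2:ℝ)).sub
        ((((hut t x).pow (p+2)).const_mul s₁).div_const _)).add
        ((hasDerivAt_normSq (hp2t t x)).const_mul (s₂/k)) |>.sub
        (((hut t x).const_mul s₂).mul (hasDerivAt_normSq (hpt t x)))
  -- space derivative of X₄
  have hXfun : (fun y => X₄ t y) = fun y => -(1/2) * (U22 (t, y)
        + s₁ * (u t y)^(p+1) / (p+1) + s₂ * Complex.normSq (ψ t y))^2
      - U1 (t, y) * U2 (t, y)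
      - (s₂ / k) * (P1 (t, y) * (starRingEnd ℂ) (P2 (t, y))
        + P2 (t, y) * (starRingEnd ℂ) (P1 (t, y))).re := by
    funext y
    rw [hX₄, (hux t y).deriv, (hpx t y).deriv, (hut t y).deriv, (hpt t y).deriv, hit2u t y]
  have Hinner : HasDerivAt (fun y => U22 (t, y)
        + s₁ * (u t y)^(p+1) / (p+1) + s₂ * Complex.normSq (ψ t y))
      (U222 (t, x) + s₁ * (((p+1:ℕ)) * (u t x)^(p+1-1) * U2 (t, x)) / (p+1)
        + s₂ * (P2 (t, x) * (starRingEnd ℂ) (ψ t x)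
          + ψ t x * (starRingEnd ℂ) (P2 (t, x))).re) x :=
    ((hu22x t x).add ((((hux t x).pow (p+1)).const_mul s₁).div_const _)).add
      ((hasDerivAt_normSq (hpx t x)).const_mul s₂)
  have Hcx : HasDerivAt (fun y => (P1 (t, y) * (starRingEnd ℂ) (P2 (t, y))
        + P2 (t, y) * (starRingEnd ℂ) (P1 (t, y))).re)
      ((fderiv ℝ P1 (t, x) (0, 1) * (starRingEnd ℂ) (P2 (t, x))
        + P1 (t, x) * (starRingEnd ℂ) (P22 (t, x))
        + (P22 (t, x) * (starRingEnd ℂ) (P1 (t, x))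
        + P2 (t, x) * (starRingEnd ℂ) (fderiv ℝ P1 (t, x) (0, 1)))).re) x := by
    have hm := ((hp1x t x).mul ((hp2x t x).star)).add ((hp2x t x).mul ((hp1x t x).star))
    exact Complex.reCLM.hasFDerivAt.comp_hasDerivAt x hm
  have HX : HasDerivAt (fun y => X₄ t y)
      ((-(1/2) * ((2:ℕ) * (U22 (t, x)
          + s₁ * (u t x)^(p+1) / (p+1) + s₂ * Complex.normSq (ψ t x))^(2-1)
          * (U222 (t, x) + s₁ * (((p+1:ℕ)) * (u t x)^(p+1-1) * U2 (t, x)) / (p+1)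
            + s₂ * (P2 (t, x) * (starRingEnd ℂ) (ψ t x)
              + ψ t x * (starRingEnd ℂ) (P2 (t, x))).re))
        - (fderiv ℝ U1 (t, x) (0, 1) * U2 (t, x) + U1 (t, x) * U22 (t, x)))
        - (s₂ / k) * ((fderiv ℝ P1 (t, x) (0, 1) * (starRingEnd ℂ) (P2 (t, x))
          + P1 (t, x) * (starRingEnd ℂ) (P22 (t, x))
          + (P22 (t, x) * (starRingEnd ℂ) (P1 (t, x))
          + P2 (t, x) * (starRingEnd ℂ) (fderiv ℝ P1 (t, x) (0, 1)))).re)) x := by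
    rw [hXfun]
    exact (((Hinner.pow 2).const_mul (-(1/2:ℝ))).sub
      ((hu1x t x).mul (hu2x t x))).sub (Hcx.const_mul (s₂/k))
  rw [HT.deriv, HX.deriv]
  -- swap mixed partials
  have hswapu : fderiv ℝ U1 (t, x) (0, 1) = fderiv ℝ U2 (t, x) (1, 0) :=
    fderiv_swap U hu (t, x) (1, 0) (0, 1)
  have hswapp : fderiv ℝ P1 (t, x) (0, 1) = fderiv ℝ P2 (t, x) (1, 0) :=
    fderiv_swap Ψ hψ (t, x) (1, 0) (0, 1)
  rw [hswapu, hswapp]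
  -- substitute the PDEs
  have hA22 : P22 (t, x) = -(Complex.I * P1 (t, x)) - (k:ℂ) * (u t x : ℂ) * ψ t x := by
    have := E2 t x; linear_combination this
  have hU222 : U222 (t, x) = -(U1 (t, x) + s₁ * (u t x) ^ p * U2 (t, x)
      + s₂ * (P2 (t, x) * (starRingEnd ℂ) (ψ t x)
        + ψ t x * (starRingEnd ℂ) (P2 (t, x))).re) := by
    have := E1 t x; linarith
  rw [hA22, hU222]
  have hp1 : ((p:ℝ) + 1) ≠ 0 := by positivity
  have hp2 : ((p:ℝ) + 2) ≠ 0 := by positivity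
  push_cast
  simp only [Complex.normSq_apply, Complex.add_re, Complex.mul_re, Complex.mul_im,
    Complex.conj_re, Complex.conj_im, Complex.neg_re, Complex.neg_im, Complex.sub_re,
    Complex.sub_im, Complex.I_re, Complex.I_im, Complex.ofReal_re, Complex.ofReal_im,
    Complex.add_im, pow_succ]
  field_simp
  ring
end
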